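/- Let b, c : ℝ → ℝ be smooth, let m₁, m₂, m₃ ∈ ℝ satisfy m₁ = m₃² − m₂², define m(y) = m₁·y + m₂·B(y) + m₃·C(y), and set Q(t,x) = exp(m₂t + m₃x). Then for every smooth function u : ℝ² → ℝ (not necessarily a solution), the current generated by the space-translation characteristic p = −∂ₓu and the adjoint-symmetry Q, namely Ψᵗ = −Q·∂ₜ∂ₓu − (b(u) − m₂)·Q·∂ₓu and Ψˣ = Q·∂ₓ²u − (c(u) + m₃)·Q·∂ₓu, satisfies ∂ₜΨᵗ + ∂ₓ(Ψˣ + Q·F[u]) = m₃·Q·F[u] on ℝ². (Thus the multiplier of this symmetry-generated conservation law is ∂ₓQ = m₃·Q.) -/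

import Mathlib

/-!
For any `p` and `q` the current `(Ψᵗ, Ψˣ)` satisfies `∂ₜΨᵗ + ∂ₓΨˣ = q·L[u]p − p·L*[u]q`, where
`L[u]` is the linearization of `F` at `u` and `L*[u]` its adjoint. Since `F` does not depend on `x`,
`L[u](∂ₓu) = ∂ₓ(F[u])`; and `Q = exp(m₂t + m₃x)` solves `L*[u]Q = 0` because
`m' = m₁ + m₂b + m₃c` and `m₁ = m₃² − m₂²`. So with `p = −∂ₓu` the divergence of the current is
`−Q·∂ₓF[u]`, and adding `∂ₓ(Q·F[u])` leaves `∂ₓQ·F[u] = m₃·Q·F[u]`.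
-/

noncomputable section

open Real

/-- Partial derivative in the first (time) variable. -/
def Dt (u : ℝ → ℝ → ℝ) : ℝ → ℝ → ℝ := fun t x => deriv (fun s => u s x) t

/-- Partial derivative in the second (space) variable. -/
def Dx (u : ℝ → ℝ → ℝ) : ℝ → ℝ → ℝ := fun t x => deriv (fun s => u t s) x

/-- Smoothness (C^∞) of a function of two real variables. -/
def Smooth2 (u : ℝ → ℝ → ℝ) : Prop := ContDiff ℝ (⊤ : ℕ∞) (fun p : ℝ × ℝ => u p.1 p.2)
/-- The semilinear wave operator F[u] = ∂ₜ²u − ∂ₓ²u + b(u)∂ₜu + c(u)∂ₓu + m(u). -/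
def Fop (b c m : ℝ → ℝ) (u : ℝ → ℝ → ℝ) : ℝ → ℝ → ℝ := fun t x =>
  Dt (Dt u) t x - Dx (Dx u) t x + b (u t x) * Dt u t x + c (u t x) * Dx u t x + m (u t x)

/-- The adjoint linearized operator along u:
L*[u]q = ∂ₜ²q − ∂ₓ²q − b(u)∂ₜq − c(u)∂ₓq + m′(u)q. -/
def Lstar (b c m : ℝ → ℝ) (u q : ℝ → ℝ → ℝ) : ℝ → ℝ → ℝ := fun t x =>
  Dt (Dt q) t x - Dx (Dx q) t x - b (u t x) * Dt q t x - c (u t x) * Dx q t x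
    + deriv m (u t x) * q t x

open Function

namespace Smooth2

variable {u : ℝ → ℝ → ℝ}

theorem hasDerivAt_fderiv_fst (hu : Smooth2 u) (t x : ℝ) :
    HasDerivAt (fun s => u s x) (fderiv ℝ (uncurry u) (t, x) (1, 0)) t := by
  have h := (hu.differentiable (by simp) (t, x)).hasFDerivAt
  exact h.comp_hasDerivAt t ((hasDerivAt_id t).prodMk (hasDerivAt_const t x))

theorem hasDerivAt_fderiv_snd (hu : Smooth2 u) (t x : ℝ) :
    HasDerivAt (fun y => u t y) (fderiv ℝ (uncurry u) (t, x) (0, 1)) x := by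
  have h := (hu.differentiable (by simp) (t, x)).hasFDerivAt
  exact h.comp_hasDerivAt x ((hasDerivAt_const x t).prodMk (hasDerivAt_id x))

theorem hasDerivAt_Dt (hu : Smooth2 u) (t x : ℝ) :
    HasDerivAt (fun s => u s x) (Dt u t x) t :=
  (hu.hasDerivAt_fderiv_fst t x).differentiableAt.hasDerivAt

theorem hasDerivAt_Dx (hu : Smooth2 u) (t x : ℝ) :
    HasDerivAt (fun y => u t y) (Dx u t x) x :=
  (hu.hasDerivAt_fderiv_snd t x).differentiableAt.hasDerivAt

theorem uncurry_Dt (hu : Smooth2 u) :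
    uncurry (Dt u) = fun p => fderiv ℝ (uncurry u) p (1, 0) :=
  funext fun p => (hu.hasDerivAt_fderiv_fst p.1 p.2).deriv

theorem uncurry_Dx (hu : Smooth2 u) :
    uncurry (Dx u) = fun p => fderiv ℝ (uncurry u) p (0, 1) :=
  funext fun p => (hu.hasDerivAt_fderiv_snd p.1 p.2).deriv

theorem contDiff_fderiv_uncurry (hu : Smooth2 u) :
    ContDiff ℝ (⊤ : ℕ∞) (fderiv ℝ (uncurry u)) :=
  hu.fderiv_right (by exact_mod_cast le_top)

protected theorem Dt (hu : Smooth2 u) : Smooth2 (Dt u) := by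
  change ContDiff ℝ _ (uncurry (Dt u))
  rw [hu.uncurry_Dt]
  exact hu.contDiff_fderiv_uncurry.clm_apply contDiff_const

protected theorem Dx (hu : Smooth2 u) : Smooth2 (Dx u) := by
  change ContDiff ℝ _ (uncurry (Dx u))
  rw [hu.uncurry_Dx]
  exact hu.contDiff_fderiv_uncurry.clm_apply contDiff_const

theorem Dt_Dx_comm (hu : Smooth2 u) : Dt (Dx u) = Dx (Dt u) := by
  funext t x
  have hD : DifferentiableAt ℝ (fderiv ℝ (uncurry u)) (t, x) :=
    hu.contDiff_fderiv_uncurry.differentiable (by simp) _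
  have second (v w : ℝ × ℝ) : fderiv ℝ (fun p => fderiv ℝ (uncurry u) p v) (t, x) w
      = fderiv ℝ (fderiv ℝ (uncurry u)) (t, x) w v := by
    rw [fderiv_clm_apply hD (differentiableAt_const v)]
    simp
  have symm : IsSymmSndFDerivAt ℝ (uncurry u) (t, x) :=
    hu.contDiffAt.isSymmSndFDerivAt (by
      simpa [minSmoothness_of_isRCLikeNormedField]
        using WithTop.coe_le_coe.mpr (le_top : (2 : ℕ∞) ≤ ⊤))
  calc Dt (Dx u) t x
      = fderiv ℝ (fun p => fderiv ℝ (uncurry u) p (0, 1)) (t, x) (1, 0) := by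
        rw [← hu.uncurry_Dx]; exact (hu.Dx.hasDerivAt_fderiv_fst t x).deriv
    _ = fderiv ℝ (fun p => fderiv ℝ (uncurry u) p (1, 0)) (t, x) (0, 1) := by
        rw [second, second, symm]
    _ = Dx (Dt u) t x := by
        rw [← hu.uncurry_Dt]; exact (hu.Dt.hasDerivAt_fderiv_snd t x).deriv.symm

end Smooth2

theorem Dt_const_mul (a : ℝ) (f : ℝ → ℝ → ℝ) :
    Dt (fun t x => a * f t x) = fun t x => a * Dt f t x :=
  funext₂ fun _ _ => deriv_const_mul_field a

theorem Dx_const_mul (a : ℝ) (f : ℝ → ℝ → ℝ) :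
    Dx (fun t x => a * f t x) = fun t x => a * Dx f t x :=
  funext₂ fun _ _ => deriv_const_mul_field a

/-- The linearization `L[u]` of `Fop b c m` at `u`. -/
def Lin (b c m : ℝ → ℝ) (u p : ℝ → ℝ → ℝ) : ℝ → ℝ → ℝ := fun t x =>
  Dt (Dt p) t x - Dx (Dx p) t x + b (u t x) * Dt p t x + c (u t x) * Dx p t x
    + (deriv b (u t x) * Dt u t x + deriv c (u t x) * Dx u t x + deriv m (u t x)) * p t x

/-- The symmetry/adjoint-symmetry current `(Ψᵗ, Ψˣ)` of a characteristic `p` and a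
function `q`. -/
def currentT (b : ℝ → ℝ) (u p q : ℝ → ℝ → ℝ) : ℝ → ℝ → ℝ := fun t x =>
  q t x * Dt p t x + (b (u t x) * q t x - Dt q t x) * p t x

def currentX (c : ℝ → ℝ) (u p q : ℝ → ℝ → ℝ) : ℝ → ℝ → ℝ := fun t x =>
  -q t x * Dx p t x + (c (u t x) * q t x + Dx q t x) * p t x

section Current

variable {b c : ℝ → ℝ} {u p q : ℝ → ℝ → ℝ}

theorem differentiableAt_currentX (hc : Differentiable ℝ c) (hu : Smooth2 u) (hp : Smooth2 p)
    (hq : Smooth2 q) (t x : ℝ) : DifferentiableAt ℝ (fun y => currentX c u p q t y) x := by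
  have := (hu.hasDerivAt_Dx t x).differentiableAt
  have := (hp.hasDerivAt_Dx t x).differentiableAt
  have := (hp.Dx.hasDerivAt_Dx t x).differentiableAt
  have := (hq.hasDerivAt_Dx t x).differentiableAt
  have := (hq.Dx.hasDerivAt_Dx t x).differentiableAt
  unfold currentX
  fun_prop

theorem Dt_currentT_add_Dx_currentX (m : ℝ → ℝ) (hb : Differentiable ℝ b)
    (hc : Differentiable ℝ c) (hu : Smooth2 u) (hp : Smooth2 p) (hq : Smooth2 q) (t x : ℝ) :
    Dt (currentT b u p q) t x + Dx (currentX c u p q) t x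
      = q t x * Lin b c m u p t x - p t x * Lstar b c m u q t x := by
  have hbu := (hb (u t x)).hasDerivAt.comp t (hu.hasDerivAt_Dt t x)
  have hcu := (hc (u t x)).hasDerivAt.comp x (hu.hasDerivAt_Dx t x)
  have hT : HasDerivAt (fun s => currentT b u p q s x) _ t :=
    ((hq.hasDerivAt_Dt t x).fun_mul (hp.Dt.hasDerivAt_Dt t x)).fun_add
      (((hbu.fun_mul (hq.hasDerivAt_Dt t x)).fun_sub (hq.Dt.hasDerivAt_Dt t x)).fun_mul
        (hp.hasDerivAt_Dt t x))
  have hX : HasDerivAt (fun y => currentX c u p q t y) _ x :=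
    ((hq.hasDerivAt_Dx t x).fun_neg.fun_mul (hp.Dx.hasDerivAt_Dx t x)).fun_add
      (((hcu.fun_mul (hq.hasDerivAt_Dx t x)).fun_add (hq.Dx.hasDerivAt_Dx t x)).fun_mul
        (hp.hasDerivAt_Dx t x))
  rw [show Dt (currentT b u p q) t x = _ from hT.deriv,
    show Dx (currentX c u p q) t x = _ from hX.deriv]
  simp only [Lin, Lstar, comp_apply]
  ring

end Current

theorem hasDerivAt_Fop_Dx {b c m : ℝ → ℝ} {u : ℝ → ℝ → ℝ} (hb : Differentiable ℝ b)
    (hc : Differentiable ℝ c) (hm : Differentiable ℝ m) (hu : Smooth2 u) (t x : ℝ) :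
    HasDerivAt (fun y => Fop b c m u t y) (Lin b c m u (Dx u) t x) x := by
  have hux := hu.hasDerivAt_Dx t x
  have hF := (((((hu.Dt.Dt.hasDerivAt_Dx t x).fun_sub (hu.Dx.Dx.hasDerivAt_Dx t x)).fun_add
    (((hb _).hasDerivAt.comp x hux).fun_mul (hu.Dt.hasDerivAt_Dx t x))).fun_add
    (((hc _).hasDerivAt.comp x hux).fun_mul (hu.Dx.hasDerivAt_Dx t x))).fun_add
    ((hm _).hasDerivAt.comp x hux))
  refine hF.congr_deriv ?_
  have hDtDx : Dx (Dt (Dt u)) = Dt (Dt (Dx u)) := by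
    rw [← hu.Dt.Dt_Dx_comm, hu.Dt_Dx_comm]
  simp only [Lin, comp_apply, hDtDx, ← hu.Dt_Dx_comm]
  ring

section ExpAffine

variable (α β : ℝ)

theorem smooth2_exp_affine : Smooth2 (fun t x => exp (α * t + β * x)) := by
  unfold Smooth2; fun_prop

theorem Dt_exp_affine :
    Dt (fun t x => exp (α * t + β * x)) = fun t x => α * exp (α * t + β * x) :=
  funext₂ fun t x =>
    (((hasDerivAt_id' t).const_mul α).add_const (β * x)).exp.deriv.trans (by ring)

theorem Dx_exp_affine :
    Dx (fun t x => exp (α * t + β * x)) = fun t x => β * exp (α * t + β * x) :=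
  funext₂ fun t x =>
    (((hasDerivAt_id' x).const_mul β).const_add (α * t)).exp.deriv.trans (by ring)

theorem Lstar_exp_affine_eq_zero {b c m : ℝ → ℝ} {m₁ : ℝ}
    (hm : ∀ y, deriv m y = m₁ + α * b y + β * c y) (hm₁ : m₁ = β ^ 2 - α ^ 2) (u : ℝ → ℝ → ℝ) :
    Lstar b c m u (fun t x => exp (α * t + β * x)) = 0 := by
  funext t x
  simp only [Lstar, Dt_exp_affine, Dx_exp_affine, Dt_const_mul, Dx_const_mul, hm, hm₁,
    Pi.zero_apply]
  ring

end ExpAffine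

theorem hasDerivAt_of_eq_linear_add_primitives {b c m B C : ℝ → ℝ} {m₁ m₂ m₃ : ℝ}
    (hb : Continuous b) (hc : Continuous c)
    (hB : ∀ y, B y = ∫ s in (0:ℝ)..y, b s) (hC : ∀ y, C y = ∫ s in (0:ℝ)..y, c s)
    (hm : ∀ y, m y = m₁ * y + m₂ * B y + m₃ * C y) (y : ℝ) :
    HasDerivAt m (m₁ + m₂ * b y + m₃ * c y) y := by
  rw [funext hm, funext hB, funext hC]
  exact ((((hasDerivAt_id' y).const_mul m₁).fun_add
    ((hb.integral_hasStrictDerivAt 0 y).hasDerivAt.const_mul m₂)).fun_add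
    ((hc.integral_hasStrictDerivAt 0 y).hasDerivAt.const_mul m₃)).congr_deriv (by ring)

theorem Dt_add_Dx_translationCurrent {b c m : ℝ → ℝ} {u q : ℝ → ℝ → ℝ}
    (hb : Differentiable ℝ b) (hc : Differentiable ℝ c) (hm : Differentiable ℝ m)
    (hu : Smooth2 u) (hq : Smooth2 q) (hLq : Lstar b c m u q = 0) (t x : ℝ) :
    Dt (fun t x => -currentT b u (Dx u) q t x) t x
      + Dx (fun t x => -currentX c u (Dx u) q t x + q t x * Fop b c m u t x) t x
      = Dx q t x * Fop b c m u t x := by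
  have hqF := (hq.hasDerivAt_Dx t x).fun_mul (hasDerivAt_Fop_Dx hb hc hm hu t x)
  have hX := differentiableAt_currentX hc hu hu.Dx hq t x
  calc _ = -(Dt (currentT b u (Dx u) q) t x + Dx (currentX c u (Dx u) q) t x)
        + (Dx q t x * Fop b c m u t x + q t x * Lin b c m u (Dx u) t x) := by
        rw [show Dt (fun t x => -currentT b u (Dx u) q t x) t x
              = -Dt (currentT b u (Dx u) q) t x from deriv.fun_neg,
          show Dx (fun t x => -currentX c u (Dx u) q t x + q t x * Fop b c m u t x) t x
              = -Dx (currentX c u (Dx u) q) t x + (Dx q t x * Fop b c m u t x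
                + q t x * Lin b c m u (Dx u) t x) from
            (deriv_fun_add hX.fun_neg hqF.differentiableAt).trans
              (by rw [deriv.fun_neg, hqF.deriv]; rfl)]
        ring
    _ = _ := by
        rw [Dt_currentT_add_Dx_currentX m hb hc hu hu.Dx hq, hLq]
        simp only [Pi.zero_apply]
        ring

/-- The multiplier of the conservation law generated by the space-translation
characteristic p = −∂ₓu and the adjoint-symmetry Q = exp(m₂t + m₃x) is
∂ₓQ = m₃Q. -/
theorem stmt_15
    (b c : ℝ → ℝ) (hb : ContDiff ℝ (⊤ : ℕ∞) b) (hc : ContDiff ℝ (⊤ : ℕ∞) c)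
    (m₁ m₂ m₃ : ℝ) (hm₁ : m₁ = m₃ ^ 2 - m₂ ^ 2)
    (m B C : ℝ → ℝ)
    (hB : ∀ y, B y = ∫ s in (0:ℝ)..y, b s)
    (hC : ∀ y, C y = ∫ s in (0:ℝ)..y, c s)
    (hmdef : ∀ y, m y = m₁ * y + m₂ * B y + m₃ * C y)
    (Q : ℝ → ℝ → ℝ) (hQdef : ∀ t x, Q t x = Real.exp (m₂ * t + m₃ * x))
    (u : ℝ → ℝ → ℝ) (hu : Smooth2 u) :
    ∀ t x : ℝ,
      Dt (fun t x =>
          -(Q t x) * Dt (Dx u) t x - (b (u t x) - m₂) * Q t x * Dx u t x) t x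
      + Dx (fun t x =>
          (Q t x * Dx (Dx u) t x - (c (u t x) + m₃) * Q t x * Dx u t x)
            + Q t x * Fop b c m u t x) t x
        = m₃ * Q t x * Fop b c m u t x := by
  intro t x
  have hm := hasDerivAt_of_eq_linear_add_primitives hb.continuous hc.continuous hB hC hmdef
  have hQ : Q = fun t x => exp (m₂ * t + m₃ * x) := funext₂ hQdef
  have hQt : Dt Q = fun t x => m₂ * Q t x := hQ ▸ Dt_exp_affine m₂ m₃
  have hQx : Dx Q = fun t x => m₃ * Q t x := hQ ▸ Dx_exp_affine m₂ m₃
  have hLQ : Lstar b c m u Q = 0 :=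
    hQ ▸ Lstar_exp_affine_eq_zero m₂ m₃ (fun y => (hm y).deriv) hm₁ u
  have hΨt : (fun t x => -(Q t x) * Dt (Dx u) t x - (b (u t x) - m₂) * Q t x * Dx u t x)
      = fun t x => -currentT b u (Dx u) Q t x := by
    funext t x; simp only [currentT, hQt]; ring
  have hΨx : (fun t x => (Q t x * Dx (Dx u) t x - (c (u t x) + m₃) * Q t x * Dx u t x)
        + Q t x * Fop b c m u t x)
      = fun t x => -currentX c u (Dx u) Q t x + Q t x * Fop b c m u t x := by
    funext t x; simp only [currentX, hQx]; ring
  rw [hΨt, hΨx, Dt_add_Dx_translationCurrent (hb.differentiable (by simp))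
    (hc.differentiable (by simp)) (fun y => (hm y).differentiableAt) hu
    (hQ ▸ smooth2_exp_affine m₂ m₃) hLQ, hQx]
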